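/- arXiv:2503.03390 — 3 statements merged into one kernel-verified Lean document; each statement's English description precedes it below -/
import Mathlib

section
/- Let f^p ∈ ℝ[x₁, x₂], let h₁, h₂ ∈ ℝ[x₁, x₂] with h₂ ≠ 0, and let f₃(x₁, x₂, x₃) = x₃·h₂(x₁, x₂) − h₁(x₁, x₂). Let N be a positive integer, M > 0, d ∈ ℤ, and let (a_j)_{j∈ℕ} ⊆ ℂ be such that the function r₂(t) := Σ_{j=0}^∞ a_j t^{d−j} is given near infinity (for |t| > M) by this convergent series, f^p(t^N, r₂(t)) = 0 for all |t| > M, and the function t ↦ h₂(t^N, r₂(t)) is not identically zero on {t : |t| > M}. Then there exist M' ≥ M, d' ∈ ℤ and coefficients (b_j)_{j∈ℕ} ⊆ ℂ such that h₂(t^N, r₂(t)) ≠ 0 for all |t| > M', the function r₃(t) := h₁(t^N, r₂(t)) / h₂(t^N, r₂(t)) is given near infinity (for |t| > M') by the convergent series Σ_{j=0}^∞ b_j t^{d'−j}, and for all |t| > M' one has f^p(t^N, r₂(t)) = 0 and f₃(t^N, r₂(t), r₃(t)) = 0; that is, the infinity branch of the plane curve C^p lifts through the lift function h = h₁/h₂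 to an infinity branch of the space curve C defined by f^p and f₃. -/
/-!
Substitute `s = t⁻¹`. Convergence of `Σ a_j t^{d-j}` for `|t| > M` means that
`F(s) = Σ a_j s^j` has radius of convergence at least `M⁻¹`, and `r₂(s⁻¹) = s^{-d} F(s)`;
so `s ↦ q(s^{-N}, r₂(s⁻¹))` is meromorphic on the disc `|s| < M⁻¹` for every polynomial `q`.
Since `h₂` does not vanish identically along the branch and the disc is connected, `h₂` has
finite order at `s = 0`, hence no zeros on a small punctured disc. The quotient
`h₁ / h₂` is meromorphic at `0`, so `s^n (h₁/h₂)(s)` is given by a power series there, which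
becomes the required expansion `Σ b_j t^{n-j}` of `r₃` near infinity.
-/

def SeriesAt (g : ℂ → ℂ) (M : ℝ) (d : ℤ) (c : ℕ → ℂ) : Prop :=
  ∀ t : ℂ, M < ‖t‖ →
    Filter.Tendsto (fun n => ∑ j ∈ Finset.range n, c j * t ^ (d - (j : ℤ)))
      Filter.atTop (nhds (g t))

open MvPolynomial Filter Topology Metric

section Meromorphic

variable {𝕜 𝕜' : Type*} [NontriviallyNormedField 𝕜] [NontriviallyNormedField 𝕜']
  [NormedAlgebra 𝕜 𝕜'] {A : Type*} [CommSemiring A] [Algebra A 𝕜'] {σ : Type*}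

theorem MeromorphicAt.aeval_mvPolynomial {f : 𝕜 → σ → 𝕜'} {x : 𝕜}
    (hf : ∀ i, MeromorphicAt (f · i) x) (p : MvPolynomial σ A) :
    MeromorphicAt (fun z ↦ aeval (f z) p) x := by
  induction p using MvPolynomial.induction_on with
  | C a => simpa only [aeval_C] using MeromorphicAt.const _ x
  | add p q hp hq => simpa only [map_add] using hp.fun_add hq
  | mul_X p i hp => simpa only [map_mul, aeval_X] using hp.fun_mul (hf i)

theorem MeromorphicOn.aeval_mvPolynomial {f : 𝕜 → σ → 𝕜'} {U : Set 𝕜}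
    (hf : ∀ i, MeromorphicOn (f · i) U) (p : MvPolynomial σ A) :
    MeromorphicOn (fun z ↦ aeval (f z) p) U :=
  fun x hx ↦ .aeval_mvPolynomial (hf · x hx) p

theorem MeromorphicOn.eventually_ne_zero_of_isPreconnected {f : 𝕜 → 𝕜'} {U : Set 𝕜} {x y : 𝕜}
    (hf : MeromorphicOn f U) (hU : IsPreconnected U) (hx : x ∈ U) (hy : y ∈ U)
    (hfy : ContinuousAt f y) (hfy₀ : f y ≠ 0) :
    ∀ᶠ z in 𝓝[≠] x, f z ≠ 0 := by
  have hy_ne_top : meromorphicOrderAt f y ≠ ⊤ :=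
    (meromorphicOrderAt_ne_top_iff_eventually_ne_zero (hf y hy)).2
      (nhdsWithin_le_nhds (hfy.eventually_ne hfy₀))
  exact (meromorphicOrderAt_ne_top_iff_eventually_ne_zero (hf x hx)).1
    (hf.meromorphicOrderAt_ne_top_of_isPreconnected hU hy hx hy_ne_top)

/-- The exponent `d` is the `n` of `MeromorphicAt G 0` and `c` are the power series coefficients
of `z ↦ z ^ n • G z` at `0`. -/
theorem MeromorphicAt.exists_tendsto_sum_zpow_comp_inv {G : 𝕜 → 𝕜} (hG : MeromorphicAt G 0) :
    ∃ (d : ℤ) (c : ℕ → 𝕜), ∀ᶠ t in Bornology.cobounded 𝕜,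
      Tendsto (fun n ↦ ∑ j ∈ Finset.range n, c j * t ^ (d - (j : ℤ))) atTop (𝓝 (G t⁻¹)) := by
  obtain ⟨n, p, hp⟩ := hG
  refine ⟨n, p.coeff, ?_⟩
  filter_upwards [tendsto_inv₀_cobounded.eventually (hasFPowerSeriesAt_iff.1 hp),
    Bornology.eventually_ne_cobounded 0] with t hsum ht
  have hG : t ^ n * ((0 + t⁻¹ - 0) ^ n • G (0 + t⁻¹)) = G t⁻¹ := by
    simp [ht]
  rw [← hG]
  refine (hsum.mul_left (t ^ n)).tendsto_sum_nat.congr fun m ↦ Finset.sum_congr rfl fun j _ ↦ ?_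
  rw [zpow_sub₀ ht, zpow_natCast, zpow_natCast, smul_eq_mul, inv_pow]
  ring

end Meromorphic

namespace SeriesAt

open FormalMultilinearSeries

variable {g : ℂ → ℂ} {M : ℝ} {d : ℤ} {a : ℕ → ℂ}

theorem tendsto_term_zero (h : SeriesAt g M d a) {t : ℂ} (ht : M < ‖t‖) :
    Tendsto (fun j : ℕ ↦ a j * t ^ (d - (j : ℤ))) atTop (𝓝 0) := by
  have := ((h t ht).comp (tendsto_add_atTop_nat 1)).sub (h t ht)
  simpa [Function.comp_def, Finset.sum_range_succ] using this

theorem le_radius (h : SeriesAt g M d a) (hM : 0 < M) :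
    ENNReal.ofReal M⁻¹ ≤ (ofScalars ℂ a).radius := by
  refine ENNReal.le_of_forall_nnreal_lt fun r hr ↦ ?_
  rcases eq_or_ne r 0 with rfl | hr₀
  · simp
  have hr₀' : (0 : ℝ) < r := by positivity
  have hrM : M < ‖((r : ℂ))⁻¹‖ := by
    rw [norm_inv, Complex.norm_of_nonneg r.coe_nonneg, lt_inv_comm₀ hM hr₀']
    exact (ENNReal.ofReal_lt_ofReal_iff (inv_pos.2 hM)).1 (by simpa using hr)
  refine (ofScalars ℂ a).le_radius_of_tendsto
    (((h.tendsto_term_zero hrM).norm.mul_const (‖((r : ℂ))⁻¹‖ ^ (-d))).congr fun j ↦ ?_)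
  rw [ofScalars_norm, norm_mul, norm_zpow, mul_assoc, ← zpow_add₀ (hrM.trans' hM).ne',
    norm_inv, Complex.norm_of_nonneg r.coe_nonneg, show d - (j : ℤ) + -d = -j by ring,
    inv_zpow', neg_neg, zpow_natCast]

theorem ball_subset_eball_radius (h : SeriesAt g M d a) (hM : 0 < M) :
    ball (0 : ℂ) M⁻¹ ⊆ eball 0 (ofScalars ℂ a).radius := fun s hs ↦ by
  rw [mem_eball, edist_zero_right]
  refine lt_of_lt_of_le ?_ (h.le_radius hM)
  rw [← ofReal_norm]
  exact (ENNReal.ofReal_lt_ofReal_iff (inv_pos.2 hM)).2 (mem_ball_zero_iff.1 hs)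

theorem eqOn_comp_inv (h : SeriesAt g M d a) (hM : 0 < M) :
    Set.EqOn (fun s ↦ g s⁻¹) (fun s ↦ s⁻¹ ^ d * (ofScalars ℂ a).sum s) (ball 0 M⁻¹ \ {0}) := by
  rintro s ⟨hs, hs₀ : s ≠ 0⟩
  have hM_lt : M < ‖s⁻¹‖ := by
    rw [norm_inv, lt_inv_comm₀ hM (norm_pos_iff.2 hs₀)]
    exact mem_ball_zero_iff.1 hs
  have hsum := ((ofScalars ℂ a).hasSum (h.ball_subset_eball_radius hM hs)).mul_left (s⁻¹ ^ d)
  refine tendsto_nhds_unique (h _ hM_lt) (hsum.tendsto_sum_nat.congr fun n ↦ ?_)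
  refine Finset.sum_congr rfl fun j _ ↦ ?_
  rw [ofScalars_apply_eq, smul_eq_mul, zpow_sub₀ (inv_ne_zero hs₀), zpow_natCast, inv_pow,
    div_inv_eq_mul]
  ring

theorem analyticAt_comp_inv (h : SeriesAt g M d a) (hM : 0 < M) {s : ℂ} (hs₀ : s ≠ 0)
    (hs : ‖s‖ < M⁻¹) : AnalyticAt ℂ (fun s ↦ g s⁻¹) s := by
  have hs_mem : s ∈ ball 0 M⁻¹ \ {0} := ⟨mem_ball_zero_iff.2 hs, hs₀⟩
  have hF := (ofScalars ℂ a).analyticOnNhd _ (h.ball_subset_eball_radius hM hs_mem.1)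
  have hlaurent : AnalyticAt ℂ (fun s ↦ s⁻¹ ^ d * (ofScalars ℂ a).sum s) s :=
    ((analyticAt_inv hs₀).fun_zpow (inv_ne_zero hs₀)).fun_mul hF
  exact hlaurent.congr (Filter.eventuallyEq_of_mem
    ((isOpen_ball.sdiff isClosed_singleton).mem_nhds hs_mem)
    (h.eqOn_comp_inv hM).symm)

theorem meromorphicOn_comp_inv (h : SeriesAt g M d a) (hM : 0 < M) :
    MeromorphicOn (fun s ↦ g s⁻¹) (ball 0 M⁻¹) := by
  intro s hs
  rcases eq_or_ne s 0 with rfl | hs₀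
  · have hF := (ofScalars ℂ a).analyticOnNhd _ (h.ball_subset_eball_radius hM hs)
    refine (((MeromorphicAt.id 0).inv.zpow d).mul hF.meromorphicAt).congr ?_
    exact Filter.eventuallyEq_of_mem
      (sdiff_mem_nhdsWithin_compl (ball_mem_nhds 0 (by positivity)) _) (h.eqOn_comp_inv hM).symm
  · exact (h.analyticAt_comp_inv hM hs₀ (mem_ball_zero_iff.1 hs)).meromorphicAt

end SeriesAt

theorem aeval_lift_div_eq_zero {R K : Type*} [CommRing R] [Field K] [Algebra R K]
    (h₁ h₂ : MvPolynomial (Fin 2) R) (x y : K) (hh₂ : aeval ![x, y] h₂ ≠ 0) :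
    aeval ![x, y, aeval ![x, y] h₁ / aeval ![x, y] h₂]
      (X 2 * rename Fin.castSucc h₂ - rename Fin.castSucc h₁) = 0 := by
  have hrestrict : ![x, y, aeval ![x, y] h₁ / aeval ![x, y] h₂] ∘ Fin.castSucc = ![x, y] := by
    funext i; fin_cases i <;> rfl
  simp only [map_sub, map_mul, aeval_X, aeval_rename, hrestrict]
  exact sub_eq_zero.2 (div_mul_cancel₀ _ hh₂)

theorem stmt_3_general (fp h₁ h₂ : MvPolynomial (Fin 2) ℝ)
    (f₃ : MvPolynomial (Fin 3) ℝ)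
    (hf₃ : f₃ = MvPolynomial.X 2 * MvPolynomial.rename Fin.castSucc h₂ -
      MvPolynomial.rename Fin.castSucc h₁)
    (N : ℕ) (M : ℝ) (hM : 0 < M) (d : ℤ) (a : ℕ → ℂ) (r₂ : ℂ → ℂ)
    (hr₂ : SeriesAt r₂ M d a)
    (hfp : ∀ t : ℂ, M < ‖t‖ → MvPolynomial.aeval ![t ^ N, r₂ t] fp = 0)
    (hne : ¬ ∀ t : ℂ, M < ‖t‖ → MvPolynomial.aeval ![t ^ N, r₂ t] h₂ = 0) :
    ∃ M' : ℝ, M ≤ M' ∧ ∃ d' : ℤ, ∃ b : ℕ → ℂ,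
      (∀ t : ℂ, M' < ‖t‖ → MvPolynomial.aeval ![t ^ N, r₂ t] h₂ ≠ 0) ∧
      SeriesAt
        (fun t => MvPolynomial.aeval ![t ^ N, r₂ t] h₁ / MvPolynomial.aeval ![t ^ N, r₂ t] h₂)
        M' d' b ∧
      (∀ t : ℂ, M' < ‖t‖ →
        MvPolynomial.aeval ![t ^ N, r₂ t] fp = 0 ∧
        MvPolynomial.aeval
          ![t ^ N, r₂ t,
            MvPolynomial.aeval ![t ^ N, r₂ t] h₁ / MvPolynomial.aeval ![t ^ N, r₂ t] h₂]
          f₃ = 0) := by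
  obtain ⟨t₀, ht₀, hh₂t₀⟩ : ∃ t₀ : ℂ, M < ‖t₀‖ ∧ aeval ![t₀ ^ N, r₂ t₀] h₂ ≠ 0 := by
    simpa using hne
  have ht₀_ne : t₀ ≠ 0 := norm_pos_iff.1 (hM.trans ht₀)
  have hs₀ : ‖t₀⁻¹‖ < M⁻¹ := by rwa [norm_inv, inv_lt_inv₀ (hM.trans ht₀) hM]
  have hcoord : ∀ i, MeromorphicOn (fun s : ℂ ↦ ![s⁻¹ ^ N, r₂ s⁻¹] i) (ball 0 M⁻¹) := by
    refine Fin.forall_fin_two.2 ⟨fun s _ ↦ ?_, hr₂.meromorphicOn_comp_inv hM⟩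
    exact (MeromorphicAt.id s).inv.pow N
  have hcoord₀ : ∀ i, AnalyticAt ℂ (fun s : ℂ ↦ ![s⁻¹ ^ N, r₂ s⁻¹] i) t₀⁻¹ := by
    refine Fin.forall_fin_two.2 ⟨?_, hr₂.analyticAt_comp_inv hM (inv_ne_zero ht₀_ne) hs₀⟩
    exact (analyticAt_inv (inv_ne_zero ht₀_ne)).fun_pow N
  have hmero : ∀ q : MvPolynomial (Fin 2) ℝ,
      MeromorphicOn (fun s ↦ aeval ![s⁻¹ ^ N, r₂ s⁻¹] q) (ball 0 M⁻¹) :=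
    MeromorphicOn.aeval_mvPolynomial hcoord
  have h0 : (0 : ℂ) ∈ ball 0 M⁻¹ := mem_ball_self (inv_pos.2 hM)
  have hh₂_ne : ∀ᶠ s in 𝓝[≠] 0, aeval ![s⁻¹ ^ N, r₂ s⁻¹] h₂ ≠ 0 :=
    (hmero h₂).eventually_ne_zero_of_isPreconnected (convex_ball 0 _).isPreconnected h0
      (mem_ball_zero_iff.2 hs₀) (AnalyticAt.aeval_mvPolynomial hcoord₀ h₂).continuousAt
      (by simpa using hh₂t₀)
  obtain ⟨d', b, hb⟩ := ((hmero h₁ 0 h0).div (hmero h₂ 0 h0)).exists_tendsto_sum_zpow_comp_inv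
  obtain ⟨R, -, hR⟩ := hasBasis_cobounded_norm.eventually_iff.1
    ((tendsto_inv₀_cobounded'.eventually hh₂_ne).and hb)
  simp only [Set.mem_ofPred_eq, Pi.div_apply, inv_inv] at hR
  refine ⟨max M R, le_max_left _ _, d', b, fun t ht ↦ (hR (max_lt_iff.1 ht).2.le).1,
    fun t ht ↦ (hR (max_lt_iff.1 ht).2.le).2, fun t ht ↦ ⟨hfp t (max_lt_iff.1 ht).1, ?_⟩⟩
  rw [hf₃]
  exact aeval_lift_div_eq_zero h₁ h₂ _ _ (hR (max_lt_iff.1 ht).2.le).1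

/-- An infinity branch `(t^N, r₂(t))` of the plane curve defined by `f^p` lifts, through
the lift function `h = h₁/h₂`, to an infinity branch `(t^N, r₂(t), r₃(t))` of the space
curve defined by `f^p` and `f₃ = x₃h₂ − h₁`, where `r₃ = h₁(t^N, r₂(t))/h₂(t^N, r₂(t))`
again admits a Puiseux-type series expansion at infinity. -/
theorem stmt_3 (fp h₁ h₂ : MvPolynomial (Fin 2) ℝ) (hh₂ : h₂ ≠ 0)
    (f₃ : MvPolynomial (Fin 3) ℝ)
    (hf₃ : f₃ = MvPolynomial.X 2 * MvPolynomial.rename Fin.castSucc h₂ -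
      MvPolynomial.rename Fin.castSucc h₁)
    (N : ℕ) (hN : 0 < N) (M : ℝ) (hM : 0 < M) (d : ℤ) (a : ℕ → ℂ) (r₂ : ℂ → ℂ)
    (hr₂ : SeriesAt r₂ M d a)
    (hfp : ∀ t : ℂ, M < ‖t‖ → MvPolynomial.aeval ![t ^ N, r₂ t] fp = 0)
    (hne : ¬ ∀ t : ℂ, M < ‖t‖ → MvPolynomial.aeval ![t ^ N, r₂ t] h₂ = 0) :
    ∃ M' : ℝ, M ≤ M' ∧ ∃ d' : ℤ, ∃ b : ℕ → ℂ,
      (∀ t : ℂ, M' < ‖t‖ → MvPolynomial.aeval ![t ^ N, r₂ t] h₂ ≠ 0) ∧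
      SeriesAt
        (fun t => MvPolynomial.aeval ![t ^ N, r₂ t] h₁ / MvPolynomial.aeval ![t ^ N, r₂ t] h₂)
        M' d' b ∧
      (∀ t : ℂ, M' < ‖t‖ →
        MvPolynomial.aeval ![t ^ N, r₂ t] fp = 0 ∧
        MvPolynomial.aeval
          ![t ^ N, r₂ t,
            MvPolynomial.aeval ![t ^ N, r₂ t] h₁ / MvPolynomial.aeval ![t ^ N, r₂ t] h₂]
          f₃ = 0) :=
  stmt_3_general fp h₁ h₂ f₃ hf₃ N M hM d a r₂ hr₂ hfp hne
end

section
/- Let n₂, n₃ be positive integers, n := lcm(n₂, n₃) and υ_k := n / n_k for k = 2, 3. For k = 2, 3 let ℓ_k ∈ ℕ, let 0 < n_{1,k} < n_{2,k} < ⋯ < n_{ℓ_k,k} ≤ n_k be integers with gcd(n_k, n_{1,k}, …, n_{ℓ_k,k}) = 1, let m_k ∈ ℂ, and let a_{1,k}, …, a_{ℓ_k,k} be nonzero complex numbers. Define the polynomials q_k(X) = m_k X^n + Σ_{j=1}^{ℓ_k} a_{j,k} X^{υ_k(n_k − n_{j,k})} ∈ ℂ[X]. Then, in the field ℂ(X)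 of rational functions over ℂ, the element X belongs to the subfield generated over ℂ by X^n, q₂(X) and q₃(X). (Equivalently, the polynomial parametrization Q̃(t) = (t^n, q₂(t), q₃(t)) of the asymptote is proper, i.e., birational onto its image.) -/
/-!
Let `F = ℂ(Xⁿ, q₂, q₃) ⊆ ℂ(X)`. Since `X` is a root of `Tⁿ - Xⁿ ∈ F[T]`, which splits in `ℂ(X)`,
the minimal polynomial of `X` over `F` is separable and splits, so it suffices to show that `X` is
its only conjugate. A conjugate `y` satisfies `yⁿ = Xⁿ`, hence `y = ζX` with `ζⁿ = 1`, and
`q_k(ζX) = q_k(X)`. Comparing the coefficients of the monomials `X^{υ_k(n_k - n_{j,k})}` gives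
`ζ^{υ_k(n_k - n_{j,k})} = 1`, so the order of `ζ` divides `υ_k · gcd(n_k, n_{1,k}, …) = υ_k`.
As `υ₂ = n₃ / gcd(n₂, n₃)` and `υ₃ = n₂ / gcd(n₂, n₃)` are coprime, `ζ = 1`.
-/

open Polynomial

theorem exists_eq_algebraMap_of_pow_eq_one {k L : Type*} [Field k] [IsAlgClosed k]
    [CommRing L] [IsDomain L] [Algebra k L] {n : ℕ} (hn : n ≠ 0) {u : L} (hu : u ^ n = 1) :
    ∃ ζ : k, ζ ^ n = 1 ∧ u = algebraMap k L ζ := by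
  have hsplit : (X ^ n - C 1 : k[X]).Splits := IsAlgClosed.splits _
  have hu0 : aeval u (X ^ n - C 1 : k[X]) = 0 := by simp [hu]
  rw [hsplit.eq_prod_roots_of_monic (monic_X_pow_sub_C 1 hn), map_multiset_prod,
    Multiset.map_map] at hu0
  obtain ⟨ζ, hζ, hζu⟩ := Multiset.mem_map.mp (Multiset.prod_eq_zero_iff.mp hu0)
  refine ⟨ζ, ?_, ?_⟩
  · simpa [sub_eq_zero] using isRoot_of_mem_roots hζ
  · simpa [sub_eq_zero] using hζu

theorem IsConjRoot.aeval_eq_of_aeval_mem {K E : Type*} [Field K] [Field E] [Algebra K E]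
    {F : IntermediateField K E} {x y : E} (h : IsConjRoot F x y) {q : K[X]}
    (hq : aeval x q ∈ F) : aeval y q = aeval x q := by
  set P : F[X] := q.map (algebraMap K F) - C ⟨aeval x q, hq⟩
  have hP : ∀ z : E, aeval z P = aeval z q - aeval x q := fun z => by
    simp [P, aeval_map_algebraMap]
  obtain ⟨R, hR⟩ := minpoly.dvd F x (by rw [hP, sub_self])
  have hPy := hP y
  rw [hR, map_mul, h.aeval_eq_zero, zero_mul] at hPy
  exact sub_eq_zero.mp hPy.symm

theorem Nat.lcm_div_left_eq_div_gcd {a b : ℕ} (ha : 0 < a) :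
    Nat.lcm a b / a = b / Nat.gcd a b := by
  rw [Nat.lcm, Nat.mul_div_assoc _ (Nat.gcd_dvd_right a b), Nat.mul_div_cancel_left _ ha]

theorem Nat.coprime_lcm_div_left_lcm_div_right {a b : ℕ} (ha : 0 < a) (hb : 0 < b) :
    Nat.Coprime (Nat.lcm a b / a) (Nat.lcm a b / b) := by
  rw [Nat.lcm_div_left_eq_div_gcd ha, Nat.lcm_comm, Nat.lcm_div_left_eq_div_gcd hb,
    Nat.gcd_comm b a]
  exact (Nat.coprime_div_gcd_div_gcd (Nat.gcd_pos_of_pos_left b ha)).symm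

theorem Polynomial.pow_eq_one_of_comp_C_mul_X_eq_self {R : Type*} [CommRing R] [IsDomain R]
    {q : R[X]} {ζ : R} (hq : q.comp (C ζ * X) = q) {i : ℕ} (hi : q.coeff i ≠ 0) :
    ζ ^ i = 1 := by
  have := congrArg (coeff · i) hq
  simp only [comp_C_mul_X_coeff] at this
  exact mul_left_cancel₀ hi (this.trans (mul_one _).symm)

theorem Polynomial.coeff_sum_C_mul_X_pow_of_injective {R ι : Type*} [Semiring R] [Fintype ι]
    {d : ι → ℕ} (hd : Function.Injective d) (a : ι → R) (j : ι) :
    (∑ i, C (a i) * X ^ d i).coeff (d j) = a j := by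
  classical
  simp [coeff_C_mul, coeff_X_pow, hd.eq_iff]

theorem orderOf_dvd_of_comp_C_mul_X_eq_self {R ι : Type*} [CommRing R] [IsDomain R] [Fintype ι]
    {N υ n : ℕ} (hυ : 0 < υ) (hn : υ * N = n) {e : ι → ℕ} (he : Function.Injective e)
    (he_pos : ∀ j, 0 < e j) (he_le : ∀ j, e j ≤ N) (hgcd : Nat.gcd N (Finset.univ.gcd e) = 1)
    {m : R} {a : ι → R} (ha : ∀ j, a j ≠ 0) {q : R[X]}
    (hq : q = C m * X ^ n + ∑ j, C (a j) * X ^ (υ * (N - e j)))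
    {ζ : R} (hζ : ζ ^ n = 1) (hqζ : q.comp (C ζ * X) = q) :
    orderOf ζ ∣ υ := by
  set d : ι → ℕ := fun j => υ * (N - e j)
  have hd_lt : ∀ j, d j < n := fun j => hn ▸ Nat.mul_lt_mul_of_pos_left
    (Nat.sub_lt (he_pos j |>.trans_le (he_le j)) (he_pos j)) hυ
  have hd : Function.Injective d := fun i j hij => by
    have := Nat.eq_of_mul_eq_mul_left hυ hij
    exact he (by have := he_le i; have := he_le j; omega)
  have hζe : ∀ j, ζ ^ (υ * e j) = 1 := fun j => by
    have hcoeff : q.coeff (d j) = a j := by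
      rw [hq, coeff_add, coeff_C_mul_X_pow, if_neg (hd_lt j).ne,
        coeff_sum_C_mul_X_pow_of_injective hd, zero_add]
    have hζd := pow_eq_one_of_comp_C_mul_X_eq_self hqζ (hcoeff ▸ ha j)
    have hsplit : υ * e j + d j = n := by
      rw [← hn, ← Nat.mul_add, Nat.add_sub_cancel' (he_le j)]
    calc ζ ^ (υ * e j) = ζ ^ (υ * e j) * ζ ^ d j := by rw [hζd, mul_one]
      _ = 1 := by rw [← pow_add, hsplit, hζ]
  have hN : orderOf ζ ∣ υ * N := hn ▸ orderOf_dvd_of_pow_eq_one hζ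
  have he : orderOf ζ ∣ υ * Finset.univ.gcd e := by
    rw [← normalize_eq υ, ← Finset.gcd_mul_left]
    exact Finset.dvd_gcd fun j _ => orderOf_dvd_of_pow_eq_one (hζe j)
  simpa [Nat.gcd_mul_left, hgcd] using Nat.dvd_gcd hN he

theorem RatFunc.algebraMap_comp {K : Type*} [Field K] (p r : K[X]) :
    algebraMap K[X] (RatFunc K) (p.comp r) = aeval (algebraMap K[X] (RatFunc K) r) p := by
  rw [comp_eq_aeval, aeval_algebraMap_apply]

theorem RatFunc.aeval_X_left_apply {K : Type*} [Field K] (p : K[X]) :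
    aeval RatFunc.X p = algebraMap K[X] (RatFunc K) p := by
  rw [← RatFunc.algebraMap_X, ← RatFunc.algebraMap_comp, comp_X]

theorem comp_C_mul_X_eq_self_of_isConjRoot {K : Type*} [Field K]
    {F : IntermediateField K (RatFunc K)} {ζ : K}
    (h : IsConjRoot F RatFunc.X (RatFunc.C ζ * RatFunc.X)) {q : K[X]}
    (hq : algebraMap K[X] (RatFunc K) q ∈ F) : q.comp (C ζ * X) = q := by
  rw [← RatFunc.aeval_X_left_apply] at hq
  apply RatFunc.algebraMap_injective K
  rw [RatFunc.algebraMap_comp, map_mul, RatFunc.algebraMap_X, RatFunc.algebraMap_C,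
    h.aeval_eq_of_aeval_mem hq, RatFunc.aeval_X_left_apply]

theorem exists_pow_eq_one_of_isConjRoot_X {k : Type*} [Field k] [IsAlgClosed k]
    {F : IntermediateField k (RatFunc k)} {n : ℕ} (hn : n ≠ 0) (hXn : RatFunc.X ^ n ∈ F)
    {y : RatFunc k} (h : IsConjRoot F RatFunc.X y) :
    ∃ ζ : k, ζ ^ n = 1 ∧ y = RatFunc.C ζ * RatFunc.X := by
  have hyn : y ^ n = RatFunc.X ^ n := by
    simpa using h.aeval_eq_of_aeval_mem (q := (X ^ n : k[X])) (by simpa using hXn)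
  have hX : (RatFunc.X : RatFunc k) ≠ 0 := RatFunc.X_ne_zero
  obtain ⟨ζ, hζ, hζy⟩ := exists_eq_algebraMap_of_pow_eq_one (k := k) hn
    (u := y / RatFunc.X) (by rw [div_pow, hyn, div_self (pow_ne_zero n hX)])
  refine ⟨ζ, hζ, ?_⟩
  rw [← RatFunc.algebraMap_eq_C, ← hζy, div_mul_cancel₀ _ hX]

theorem RatFunc.X_mem_of_forall_isConjRoot_eq {k : Type*} [Field k] [IsAlgClosed k] [CharZero k]
    {F : IntermediateField k (RatFunc k)} {n : ℕ} (hn : n ≠ 0) (hXn : RatFunc.X ^ n ∈ F)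
    (h : ∀ y, IsConjRoot F (RatFunc.X : RatFunc k) y → y = RatFunc.X) : RatFunc.X ∈ F := by
  set P : F[X] := Polynomial.X ^ n - Polynomial.C (⟨_, hXn⟩ : F)
  have hP : aeval (RatFunc.X : RatFunc k) P = 0 := by simp [P]
  have hint : IsIntegral F (RatFunc.X : RatFunc k) :=
    ⟨P, monic_X_pow_sub_C _ hn, by rwa [← aeval_def]⟩
  have : NeZero (n : k) := ⟨Nat.cast_ne_zero.mpr hn⟩
  obtain ⟨ζ, hζ⟩ := HasEnoughRootsOfUnity.exists_primitiveRoot k n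
  have hPsplit : (P.map (algebraMap F (RatFunc k))).Splits := by
    simpa [P] using X_pow_sub_C_splits_of_isPrimitiveRoot
      (hζ.map_of_injective (algebraMap k (RatFunc k)).injective) rfl
  have hsplit := hPsplit.of_dvd (map_ne_zero (monic_X_pow_sub_C _ hn).ne_zero)
    (map_dvd _ (minpoly.dvd F _ hP))
  by_contra hX
  obtain ⟨y, hne, hy⟩ := (notMem_iff_exists_ne_and_isConjRoot
    (minpoly.irreducible hint).separable hsplit).mp fun hbot => hX <| by
      obtain ⟨z, hz⟩ := Algebra.mem_bot.mp hbot
      exact hz ▸ z.2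
  exact hne (h y hy).symm

/-- Properness of the parametrization `Q̃(t) = (t^n, q₂(t), q₃(t))` of the asymptote:
in the field of rational functions `ℂ(X)`, the element `X` belongs to the subfield
generated over `ℂ` by `X^n`, `q₂(X)` and `q₃(X)`, where
`q_k(X) = m_k X^n + Σ_{j=1}^{ℓ_k} a_{j,k} X^{υ_k(n_k − n_{j,k})}`,
`n = lcm(n₂, n₃)`, `υ_k = n/n_k`, the exponents `0 < n_{1,k} < ⋯ < n_{ℓ_k,k} ≤ n_k`
satisfy `gcd(n_k, n_{1,k}, …, n_{ℓ_k,k}) = 1`, and the `a_{j,k}` are nonzero. -/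
theorem stmt_8 (n₂ n₃ : ℕ) (hn₂ : 0 < n₂) (hn₃ : 0 < n₃)
    (n υ₂ υ₃ : ℕ) (hn : n = Nat.lcm n₂ n₃) (hυ₂ : υ₂ = n / n₂) (hυ₃ : υ₃ = n / n₃)
    (ℓ₂ ℓ₃ : ℕ) (e₂ : Fin ℓ₂ → ℕ) (e₃ : Fin ℓ₃ → ℕ)
    (he₂mono : StrictMono e₂) (he₃mono : StrictMono e₃)
    (he₂pos : ∀ j, 0 < e₂ j) (he₃pos : ∀ j, 0 < e₃ j)
    (he₂le : ∀ j, e₂ j ≤ n₂) (he₃le : ∀ j, e₃ j ≤ n₃)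
    (hgcd₂ : Nat.gcd n₂ (Finset.univ.gcd e₂) = 1)
    (hgcd₃ : Nat.gcd n₃ (Finset.univ.gcd e₃) = 1)
    (m₂ m₃ : ℂ) (a₂ : Fin ℓ₂ → ℂ) (a₃ : Fin ℓ₃ → ℂ)
    (ha₂ : ∀ j, a₂ j ≠ 0) (ha₃ : ∀ j, a₃ j ≠ 0)
    (q₂ q₃ : Polynomial ℂ)
    (hq₂ : q₂ = Polynomial.C m₂ * Polynomial.X ^ n +
      ∑ j : Fin ℓ₂, Polynomial.C (a₂ j) * Polynomial.X ^ (υ₂ * (n₂ - e₂ j)))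
    (hq₃ : q₃ = Polynomial.C m₃ * Polynomial.X ^ n +
      ∑ j : Fin ℓ₃, Polynomial.C (a₃ j) * Polynomial.X ^ (υ₃ * (n₃ - e₃ j))) :
    (RatFunc.X : RatFunc ℂ) ∈
      IntermediateField.adjoin ℂ
        {(RatFunc.X : RatFunc ℂ) ^ n,
          algebraMap (Polynomial ℂ) (RatFunc ℂ) q₂,
          algebraMap (Polynomial ℂ) (RatFunc ℂ) q₃} := by
  set F := IntermediateField.adjoin ℂ {(RatFunc.X : RatFunc ℂ) ^ n,
    algebraMap (Polynomial ℂ) (RatFunc ℂ) q₂, algebraMap (Polynomial ℂ) (RatFunc ℂ) q₃}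
  have hXn : RatFunc.X ^ n ∈ F := IntermediateField.subset_adjoin _ _ (by simp)
  have hq₂F : algebraMap _ _ q₂ ∈ F := IntermediateField.subset_adjoin _ _ (by simp)
  have hq₃F : algebraMap _ _ q₃ ∈ F := IntermediateField.subset_adjoin _ _ (by simp)
  have hn0 : n ≠ 0 := hn ▸ Nat.lcm_ne_zero hn₂.ne' hn₃.ne'
  have hυn₂ : υ₂ * n₂ = n := hυ₂ ▸ Nat.div_mul_cancel (hn ▸ Nat.dvd_lcm_left n₂ n₃)
  have hυn₃ : υ₃ * n₃ = n := hυ₃ ▸ Nat.div_mul_cancel (hn ▸ Nat.dvd_lcm_right n₂ n₃)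
  have hcop : Nat.Coprime υ₂ υ₃ :=
    hυ₂ ▸ hυ₃ ▸ hn ▸ Nat.coprime_lcm_div_left_lcm_div_right hn₂ hn₃
  refine RatFunc.X_mem_of_forall_isConjRoot_eq hn0 hXn fun y hy => ?_
  obtain ⟨ζ, hζ, rfl⟩ := exists_pow_eq_one_of_isConjRoot_X hn0 hXn hy
  have h₂ : orderOf ζ ∣ υ₂ := orderOf_dvd_of_comp_C_mul_X_eq_self
    (Nat.pos_of_mul_pos_right (hυn₂ ▸ Nat.pos_of_ne_zero hn0)) hυn₂ he₂mono.injective he₂pos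
    he₂le hgcd₂ ha₂ hq₂ hζ (comp_C_mul_X_eq_self_of_isConjRoot hy hq₂F)
  have h₃ : orderOf ζ ∣ υ₃ := orderOf_dvd_of_comp_C_mul_X_eq_self
    (Nat.pos_of_mul_pos_right (hυn₃ ▸ Nat.pos_of_ne_zero hn0)) hυn₃ he₃mono.injective he₃pos
    he₃le hgcd₃ ha₃ hq₃ hζ (comp_C_mul_X_eq_self_of_isConjRoot hy hq₃F)
  rw [orderOf_eq_one_iff.mp (Nat.eq_one_of_dvd_coprimes hcop h₂ h₃), map_one, one_mul]
end

section
/- Let N ∈ ℕ, M > 0, and for k = 2, 3 let d_k ∈ ℕ and coefficients (c_{j,k})_{j∈ℕ} ⊆ ℂ be such that the function r_k(t) := Σ_{j=0}^∞ c_{j,k} t^{d_k − j} is given near infinity (for |t| > M) by this convergent series. Let q_k(t) := Σ_{j=0}^{d_k} c_{j,k} t^{d_k − j} be the polynomial truncation retaining exactly the terms with non-negative exponents. Then ‖(r₂(t), r₃(t)) − (q₂(t), q₃(t))‖ tends to 0 as |t| → ∞; consequently, for any set C ⊆ ℂ³ containing the branch points (t^N, r₂(t), r₃(t)) for all |t|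 > M, the infimum distance Metric.infDist ((t^N, q₂(t), q₃(t))) C tends to 0 as |t| → ∞, i.e., the curve parametrized by Q̃(t) = (t^N, q₂(t), q₃(t)) and the curve containing the branch approach each other at infinity. -/
/-- The point `(a, b)` of `ℂ²` with the Euclidean norm. -/
noncomputable def vec2 (a b : ℂ) : EuclideanSpace ℂ (Fin 2) :=
  (WithLp.equiv 2 (Fin 2 → ℂ)).symm ![a, b]

/-- The point `(a, b, c)` of `ℂ³` with the Euclidean norm. -/
noncomputable def vec3 (a b c : ℂ) : EuclideanSpace ℂ (Fin 3) :=
  (WithLp.equiv 2 (Fin 3 → ℂ)).symm ![a, b, c]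

/-- The filter of complex numbers of arbitrarily large modulus. -/
noncomputable def atComplexInfinity : Filter ℂ := Filter.comap (fun z : ℂ => ‖z‖) Filter.atTop

/-!
Convergence of the series at one point `t₀` with `|t₀| = R > M` bounds its terms, i.e.
`‖c_j‖ ≤ K R^{j-d}`. For `|t| ≥ 2R` the terms with negative exponent are then dominated by
`K (R/|t|)^{m+1}`, a geometric series with sum at most `2KR/|t|`, which tends to `0`.
The distance to the curve is at most the distance to the branch point with the same
first coordinate `t^N`.
-/

open Filter Topology

lemma tendsto_norm_atComplexInfinity : Tendsto (‖·‖) atComplexInfinity atTop :=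
  tendsto_comap

lemma dist_vec2_le (a b a' b' : ℂ) : dist (vec2 a b) (vec2 a' b') ≤ dist a a' + dist b b' := by
  rw [EuclideanSpace.dist_eq, Real.sqrt_le_left (by positivity)]
  simp only [vec2, WithLp.equiv_symm_apply, Fin.sum_univ_two, Matrix.cons_val_zero,
    Matrix.cons_val_one, Matrix.cons_val_fin_one]
  nlinarith [dist_nonneg (x := a) (y := a'), dist_nonneg (x := b) (y := b')]

lemma dist_vec3_eq_dist_vec2 (a b c b' c' : ℂ) :
    dist (vec3 a b c) (vec3 a b' c') = dist (vec2 b c) (vec2 b' c') := by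
  simp [EuclideanSpace.dist_eq, vec2, vec3, Fin.sum_univ_three, Fin.sum_univ_two]

namespace SeriesAt

variable {g : ℂ → ℂ} {M : ℝ} {c : ℕ → ℂ}

lemma exists_norm_coeff_le {d : ℤ} (hg : SeriesAt g M d c) :
    ∃ R, 0 < R ∧ M < R ∧ ∃ K, 0 ≤ K ∧ ∀ j : ℕ, ‖c j‖ ≤ K * R ^ ((j : ℤ) - d) := by
  set R := max M 0 + 1
  have hR : 0 < R := by positivity
  have hconv := hg R (by rw [Complex.norm_of_nonneg hR.le]; linarith [le_max_left M 0])
  have hterm : Tendsto (fun n => c n * (R : ℂ) ^ (d - n)) atTop (𝓝 0) := by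
    simpa [Finset.sum_range_succ] using (hconv.comp (tendsto_add_atTop_nat 1)).sub hconv
  obtain ⟨K, hK⟩ := hterm.norm.bddAbove_range
  refine ⟨R, hR, by linarith [le_max_left M 0], K, (norm_nonneg _).trans (hK ⟨0, rfl⟩),
    fun j => ?_⟩
  have hj : ‖c j‖ * R ^ (d - j) ≤ K := by
    simpa [norm_zpow, abs_of_pos hR] using hK ⟨j, rfl⟩
  calc ‖c j‖ = ‖c j‖ * R ^ (d - j) * R ^ ((j : ℤ) - d) := by
        rw [mul_assoc, ← zpow_add₀ hR.ne']; simp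
    _ ≤ K * R ^ ((j : ℤ) - d) := by gcongr

lemma norm_sub_truncation_le {d : ℕ} (hg : SeriesAt g M d c) {R K : ℝ} (hR : 0 < R)
    (hMR : M < R) (hK : 0 ≤ K) (hc : ∀ j : ℕ, ‖c j‖ ≤ K * R ^ ((j : ℤ) - d)) {t : ℂ}
    (ht : 2 * R ≤ ‖t‖) :
    ‖g t - ∑ j ∈ Finset.range (d + 1), c j * t ^ (d - j)‖ ≤ 2 * K * R / ‖t‖ := by
  set F : ℕ → ℂ := fun j => c j * t ^ ((d : ℤ) - j)
  set ρ := R / ‖t‖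
  have ht₀ : 0 < ‖t‖ := by linarith
  have hρ : ρ ≤ 1 / 2 := by rw [div_le_iff₀ ht₀]; linarith
  have htail : ∀ m, ‖F (m + (d + 1))‖ ≤ K * ρ * (1 / 2) ^ m := by
    intro m
    have hexp : (d : ℤ) - (m + (d + 1) : ℕ) = -((m + 1 : ℕ) : ℤ) := by push_cast; ring
    have hcm : ‖c (m + (d + 1))‖ ≤ K * R ^ (m + 1) := by
      have := hc (m + (d + 1))
      rwa [show ((m + (d + 1) : ℕ) : ℤ) - d = ((m + 1 : ℕ) : ℤ) by push_cast; ring,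
        zpow_natCast] at this
    calc ‖F (m + (d + 1))‖ = ‖c (m + (d + 1))‖ / ‖t‖ ^ (m + 1) := by
          simp only [F, hexp, norm_mul, zpow_neg, zpow_natCast, norm_inv, norm_pow,
            div_eq_mul_inv]
      _ ≤ K * ρ ^ (m + 1) := by
          rw [div_pow, ← mul_div_assoc]; gcongr
      _ ≤ K * ρ * (1 / 2) ^ m := by
          rw [pow_succ', ← mul_assoc]; gcongr
  have hsummable : Summable (fun j => ‖F j‖) :=
    (summable_nat_add_iff (d + 1)).mp <| Summable.of_nonneg_of_le (fun _ => norm_nonneg _)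
      htail (hasSum_geometric_two.summable.mul_left _)
  have hF : HasSum F (g t) :=
    (hasSum_iff_tendsto_nat_of_summable_norm hsummable).mpr (hg t (by linarith))
  have htrunc : ∑ j ∈ Finset.range (d + 1), c j * t ^ (d - j)
      = ∑ j ∈ Finset.range (d + 1), F j := by
    refine Finset.sum_congr rfl fun j hj => ?_
    rw [← zpow_natCast, Nat.cast_sub (Finset.mem_range_succ_iff.mp hj)]
  rw [htrunc]
  calc _ ≤ K * ρ * 2 :=
        ((hasSum_nat_add_iff' (d + 1)).mpr hF).norm_le_of_bounded
          (hasSum_geometric_two.mul_left (K * ρ)) htail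
    _ = 2 * K * R / ‖t‖ := by ring

lemma tendsto_norm_sub_truncation {d : ℕ} (hg : SeriesAt g M d c) :
    Tendsto (fun t => ‖g t - ∑ j ∈ Finset.range (d + 1), c j * t ^ (d - j)‖)
      atComplexInfinity (𝓝 0) := by
  obtain ⟨R, hR, hMR, K, hK, hc⟩ := hg.exists_norm_coeff_le
  refine squeeze_zero' (g := fun t => 2 * K * R / ‖t‖)
    (Eventually.of_forall fun _ => norm_nonneg _) ?_
    (tendsto_const_nhds.div_atTop tendsto_norm_atComplexInfinity)
  filter_upwards [tendsto_norm_atComplexInfinity.eventually_ge_atTop (2 * R)] with t ht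
  exact hg.norm_sub_truncation_le hR hMR hK hc ht

end SeriesAt

theorem stmt_10_general (N : ℕ) (M : ℝ) (d₂ d₃ : ℕ) (c₂ c₃ : ℕ → ℂ)
    (r₂ r₃ : ℂ → ℂ)
    (hr₂ : SeriesAt r₂ M (d₂ : ℤ) c₂) (hr₃ : SeriesAt r₃ M (d₃ : ℤ) c₃)
    (q₂ q₃ : ℂ → ℂ)
    (hq₂ : q₂ = fun t => ∑ j ∈ Finset.range (d₂ + 1), c₂ j * t ^ (d₂ - j))
    (hq₃ : q₃ = fun t => ∑ j ∈ Finset.range (d₃ + 1), c₃ j * t ^ (d₃ - j)) :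
    Filter.Tendsto (fun t => ‖vec2 (r₂ t) (r₃ t) - vec2 (q₂ t) (q₃ t)‖)
        atComplexInfinity (nhds 0) ∧
    ∀ C : Set (EuclideanSpace ℂ (Fin 3)),
      (∀ t : ℂ, M < ‖t‖ → vec3 (t ^ N) (r₂ t) (r₃ t) ∈ C) →
      Filter.Tendsto (fun t => Metric.infDist (vec3 (t ^ N) (q₂ t) (q₃ t)) C)
        atComplexInfinity (nhds 0) := by
  have hsum : Tendsto (fun t => dist (r₂ t) (q₂ t) + dist (r₃ t) (q₃ t))
      atComplexInfinity (𝓝 0) := by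
    subst hq₂ hq₃
    simpa [dist_eq_norm] using
      hr₂.tendsto_norm_sub_truncation.add hr₃.tendsto_norm_sub_truncation
  have hvec : Tendsto (fun t => ‖vec2 (r₂ t) (r₃ t) - vec2 (q₂ t) (q₃ t)‖)
      atComplexInfinity (𝓝 0) :=
    squeeze_zero (fun _ => norm_nonneg _) (fun t => (dist_eq_norm ..).ge.trans (dist_vec2_le ..))
      hsum
  refine ⟨hvec, fun C hC => squeeze_zero' (Eventually.of_forall fun _ => Metric.infDist_nonneg)
    ?_ hvec⟩
  filter_upwards [tendsto_norm_atComplexInfinity.eventually_gt_atTop M] with t ht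
  calc _ ≤ dist (vec3 (t ^ N) (q₂ t) (q₃ t)) (vec3 (t ^ N) (r₂ t) (r₃ t)) :=
        Metric.infDist_le_dist_of_mem (hC t ht)
    _ = _ := by rw [dist_vec3_eq_dist_vec2, dist_comm, dist_eq_norm]

/-- If `r₂, r₃` are given near infinity by series `Σ_{j} c_{j,k} t^{d_k−j}` and
`q_k(t) = Σ_{j=0}^{d_k} c_{j,k} t^{d_k−j}` are their truncations to the terms with
non-negative exponents, then `‖(r₂(t), r₃(t)) − (q₂(t), q₃(t))‖ → 0` as `|t| → ∞`, and
for any set `C ⊆ ℂ³` containing the branch points `(t^N, r₂(t), r₃(t))` for `|t| > M`,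
the infimum distance from `(t^N, q₂(t), q₃(t))` to `C` tends to `0` as `|t| → ∞`. -/
theorem stmt_10 (N : ℕ) (M : ℝ) (hM : 0 < M) (d₂ d₃ : ℕ) (c₂ c₃ : ℕ → ℂ)
    (r₂ r₃ : ℂ → ℂ)
    (hr₂ : SeriesAt r₂ M (d₂ : ℤ) c₂) (hr₃ : SeriesAt r₃ M (d₃ : ℤ) c₃)
    (q₂ q₃ : ℂ → ℂ)
    (hq₂ : q₂ = fun t => ∑ j ∈ Finset.range (d₂ + 1), c₂ j * t ^ (d₂ - j))
    (hq₃ : q₃ = fun t => ∑ j ∈ Finset.range (d₃ + 1), c₃ j * t ^ (d₃ - j)) :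
    Filter.Tendsto (fun t => ‖vec2 (r₂ t) (r₃ t) - vec2 (q₂ t) (q₃ t)‖)
        atComplexInfinity (nhds 0) ∧
    ∀ C : Set (EuclideanSpace ℂ (Fin 3)),
      (∀ t : ℂ, M < ‖t‖ → vec3 (t ^ N) (r₂ t) (r₃ t) ∈ C) →
      Filter.Tendsto (fun t => Metric.infDist (vec3 (t ^ N) (q₂ t) (q₃ t)) C)
        atComplexInfinity (nhds 0) :=
  stmt_10_general N M d₂ d₃ c₂ c₃ r₂ r₃ hr₂ hr₃ q₂ q₃ hq₂ hq₃
end
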